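/- Under the duality pairing ⟨Z_α, M_β⟩ = δ_{α,β} between NSymm and QSymm, the coproduct of NSymm is dual to the overlapping shuffle product of QSymm: ⟨μ(Z_α), M_β ⊗ M_γ⟩ = ⟨Z_α, M_β · M_γ⟩ for all compositions α, β, γ. -/

import Mathlib

open TensorProduct

/-- `NSymm = ℤ⟨Z₁, Z₂, …⟩`, the generator indexed by `n` representing `Z_{n+1}`. -/
abbrev NSymm : Type := FreeAlgebra ℤ ℕ

/-- The generators `Z_n`, with `Z 0 = 1`. -/
noncomputable def Z : ℕ → NSymm
  | 0 => 1
  | n + 1 => FreeAlgebra.ι ℤ n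

/-- The monomial `Z_α = Z_{a₁} ⋯ Z_{a_m}` attached to a composition
`α = [a₁,…,a_m]`. -/
noncomputable def Zl (α : List ℕ+) : NSymm := (α.map fun a => Z (a : ℕ)).prod

/-- The overlapping shuffle product of compositions. -/
noncomputable def osh : List ℕ+ → List ℕ+ → (List ℕ+ →₀ ℤ)
  | [], β => Finsupp.single β 1
  | a :: α', [] => Finsupp.single (a :: α') 1
  | a :: α', b :: β' =>
      Finsupp.mapDomain (a :: ·) (osh α' (b :: β'))
        + Finsupp.mapDomain (b :: ·) (osh (a :: α') β')
        + Finsupp.mapDomain ((a + b) :: ·) (osh α' β')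
  termination_by α β => α.length + β.length
  decreasing_by all_goals (simp [List.length_cons]; try omega)

/-- Its `ℤ`-bilinear extension: the multiplication of `QSymm`. -/
noncomputable def oshMul (x y : List ℕ+ →₀ ℤ) : List ℕ+ →₀ ℤ :=
  x.sum fun α c => y.sum fun β d => (c * d) • osh α β

/-!
Multiplying out `μ(Z_α) = ∏ μ(Z_{a_i})` one letter at a time, with
`μ(Z_a) = Z_a ⊗ 1 + 1 ⊗ Z_a + ∑_{b+c=a} Z_b ⊗ Z_c`, shows that the coefficient of `Z_β ⊗ Z_γ`
in `μ(Z_α)` obeys the same three-term recursion as the coefficient of `M_α` in the overlapping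
shuffle `M_β · M_γ`. The two pairings read off exactly these two coefficients.
-/

open Finset Finsupp

noncomputable def pnatAntidiagonal (n : ℕ+) : Finset (ℕ+ × ℕ+) :=
  (antidiagonal (n : ℕ)).preimage (Prod.map (↑) (↑))
    (PNat.coe_injective.prodMap PNat.coe_injective).injOn

lemma mem_pnatAntidiagonal {n : ℕ+} {p : ℕ+ × ℕ+} :
    p ∈ pnatAntidiagonal n ↔ p.1 + p.2 = n := by
  simp [pnatAntidiagonal, ← PNat.coe_inj]

lemma sum_antidiagonal_eq_add_add_sum_pnatAntidiagonal {M : Type*} [AddCommMonoid M]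
    (n : ℕ+) (f : ℕ × ℕ → M) :
    ∑ p ∈ antidiagonal (n : ℕ), f p
      = f (n, 0) + f (0, n) + ∑ p ∈ pnatAntidiagonal n, f (p.1, p.2) := by
  classical
  have hboundary : {p ∈ antidiagonal (n : ℕ) | p ∉ Set.range (Prod.map PNat.val PNat.val)}
      = {((n : ℕ), 0), (0, (n : ℕ))} := by
    ext ⟨i, j⟩
    simp only [mem_filter, HasAntidiagonal.mem_antidiagonal, Set.mem_range, Prod.exists,
      Prod.map, Prod.mk.injEq, not_exists, not_and, mem_insert, mem_singleton]
    constructor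
    · rintro ⟨hij, hr⟩
      rcases Nat.eq_zero_or_pos i with rfl | hi
      · omega
      rcases Nat.eq_zero_or_pos j with rfl | hj
      · omega
      exact (hr ⟨i, hi⟩ ⟨j, hj⟩ rfl rfl).elim
    · rintro (⟨rfl, rfl⟩ | ⟨rfl, rfl⟩) <;> refine ⟨by simp, fun a b ha hb => ?_⟩
      · exact b.ne_zero hb
      · exact a.ne_zero ha
  rw [← sum_filter_add_sum_filter_not _ (· ∈ Set.range (Prod.map PNat.val PNat.val)),
    hboundary, sum_pair (by simp), pnatAntidiagonal, ← sum_preimage', add_comm]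
  rfl

lemma sum_pnatAntidiagonal_ite_eq {M : Type*} [AddCommMonoid M] (n b c : ℕ+) (x : M) :
    (∑ p ∈ pnatAntidiagonal n, if p.1 = b then if p.2 = c then x else 0 else 0)
      = if b + c = n then x else 0 := by
  simp_rw [← ite_and, ← Prod.mk.injEq, Prod.mk.eta, Finset.sum_ite_eq', mem_pnatAntidiagonal]

lemma mapDomain_apply_of_leftInverse {α β M : Type*} [AddCommMonoid M] {g : α → β}
    {r : β → α} (hr : Function.LeftInverse r g) (f : α →₀ M) (y : β) [Decidable (g (r y) = y)] :
    mapDomain g f y = if g (r y) = y then f (r y) else 0 := by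
  split_ifs with h
  · rw [← h, mapDomain_apply hr.injective, h]
  · exact mapDomain_of_notMem_range _ _ fun ⟨x, hx⟩ => h (by rw [← hx, hr x])

lemma leftInverse_tail_cons {α : Type*} (a : α) : Function.LeftInverse List.tail (a :: ·) :=
  fun _ => rfl

lemma osh_apply_nil (β γ : List ℕ+) : osh β γ [] = if β = [] ∧ γ = [] then 1 else 0 := by
  match β, γ with
  | [], γ => simp [osh, single_apply]
  | a :: α', [] => simp [osh]
  | a :: α', b :: β' =>
    simp [osh, mapDomain_apply_of_leftInverse (leftInverse_tail_cons _)]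

lemma osh_nil_right (β : List ℕ+) : osh β [] = single β 1 := by
  cases β <;> rw [osh]

lemma oshMul_single_one (β γ : List ℕ+) : oshMul (single β 1) (single γ 1) = osh β γ := by
  simp [oshMul]

noncomputable def coproductCoeff : List ℕ+ → (List ℕ+ × List ℕ+ →₀ ℤ)
  | [] => single ([], []) 1
  | a :: α =>
      mapDomain (Prod.map (a :: ·) id) (coproductCoeff α)
        + mapDomain (Prod.map id (a :: ·)) (coproductCoeff α)
        + ∑ p ∈ pnatAntidiagonal a, mapDomain (Prod.map (p.1 :: ·) (p.2 :: ·)) (coproductCoeff α)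

-- Both sides satisfy the recursion defining `osh`, unfolded at the first letter of `α`.
lemma coproductCoeff_apply (α β γ : List ℕ+) : coproductCoeff α (β, γ) = osh β γ α := by
  have hid : Function.LeftInverse (id : List ℕ+ → List ℕ+) id := fun _ => rfl
  induction α generalizing β γ with
  | nil => simp [coproductCoeff, single_apply, osh_apply_nil, eq_comm]
  | cons a α ih =>
    rcases β with _ | ⟨b, β⟩ <;> rcases γ with _ | ⟨c, γ⟩ <;>
      simp [coproductCoeff, osh, osh_nil_right, ih, single_apply, ite_and, @eq_comm _ a,
        mapDomain_apply_of_leftInverse (leftInverse_tail_cons _),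
        mapDomain_apply_of_leftInverse ((leftInverse_tail_cons _).prodMap hid),
        mapDomain_apply_of_leftInverse (hid.prodMap (leftInverse_tail_cons _)),
        mapDomain_apply_of_leftInverse ((leftInverse_tail_cons _).prodMap (leftInverse_tail_cons _)),
        sum_pnatAntidiagonal_ite_eq]

lemma Zl_cons (a : ℕ+) (α : List ℕ+) : Zl (a :: α) = Z a * Zl α := rfl

lemma pair_Zl {pair : NSymm →ₗ[ℤ] (List ℕ+ →₀ ℤ) →ₗ[ℤ] ℤ}
    (hpair : ∀ α β : List ℕ+, pair (Zl α) (single β 1) = if α = β then 1 else 0) (α : List ℕ+) :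
    pair (Zl α) = lapply α :=
  lhom_ext fun β c => by
    rw [← smul_single_one, map_smul, hpair, lapply_apply, Finsupp.smul_apply, single_apply]
    simp [eq_comm]

section TensorSquare

-- `NSymm ⊗ NSymm` is a ring only for the `ℤ`-module structure `Algebra.toModule` used in the
-- type of `μ`; instance search would pick `AddCommGroup.toIntModule` instead.
local instance : Module ℤ NSymm := Algebra.toModule

noncomputable def ZlTensor : (List ℕ+ × List ℕ+ →₀ ℤ) →ₗ[ℤ] NSymm ⊗[ℤ] NSymm :=
  linearCombination ℤ fun p => Zl p.1 ⊗ₜ Zl p.2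

lemma tmul_mul_ZlTensor {x y : NSymm} {g h : List ℕ+ → List ℕ+}
    (hg : ∀ l, Zl (g l) = x * Zl l) (hh : ∀ l, Zl (h l) = y * Zl l) (f : List ℕ+ × List ℕ+ →₀ ℤ) :
    (x ⊗ₜ y) * ZlTensor f = ZlTensor (mapDomain (Prod.map g h) f) := by
  rw [ZlTensor, linearCombination_mapDomain, ← LinearMap.mulLeft_apply (R := ℤ),
    apply_linearCombination]
  congr 1
  ext p
  simp [hg, hh]

lemma coproduct_Z_pnat (μ : NSymm →ₐ[ℤ] NSymm ⊗[ℤ] NSymm)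
    (hμ : ∀ n : ℕ, μ (Z n) = ∑ p ∈ antidiagonal n, Z p.1 ⊗ₜ[ℤ] Z p.2) (a : ℕ+) :
    μ (Z a) = Z a ⊗ₜ 1 + 1 ⊗ₜ Z a + ∑ p ∈ pnatAntidiagonal a, Z p.1 ⊗ₜ Z p.2 := by
  rw [hμ, sum_antidiagonal_eq_add_add_sum_pnatAntidiagonal]
  rfl

lemma coproduct_Zl (μ : NSymm →ₐ[ℤ] NSymm ⊗[ℤ] NSymm)
    (hμ : ∀ n : ℕ, μ (Z n) = ∑ p ∈ antidiagonal n, Z p.1 ⊗ₜ[ℤ] Z p.2) (α : List ℕ+) :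
    μ (Zl α) = ZlTensor (coproductCoeff α) := by
  induction α with
  | nil => simp [Zl, coproductCoeff, ZlTensor, Algebra.TensorProduct.one_def]
  | cons a α ih =>
    rw [Zl_cons, map_mul, coproduct_Z_pnat μ hμ, ih, coproductCoeff, map_add, map_add, map_sum,
      add_mul, add_mul, Finset.sum_mul]
    congr 1
    · congr 1
      · exact tmul_mul_ZlTensor (fun _ => rfl) (fun _ => (one_mul _).symm) _
      · exact tmul_mul_ZlTensor (fun _ => (one_mul _).symm) (fun _ => rfl) _
    · exact sum_congr rfl fun p _ => tmul_mul_ZlTensor (fun _ => rfl) (fun _ => rfl) _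

lemma pair2_ZlTensor {pair : NSymm →ₗ[ℤ] (List ℕ+ →₀ ℤ) →ₗ[ℤ] ℤ}
    (hpair : ∀ α β : List ℕ+, pair (Zl α) (single β 1) = if α = β then 1 else 0)
    {pair2 : NSymm ⊗[ℤ] NSymm →ₗ[ℤ] ((List ℕ+ →₀ ℤ) ⊗[ℤ] (List ℕ+ →₀ ℤ)) →ₗ[ℤ] ℤ}
    (hpair2 : ∀ (x y : NSymm) (u v : List ℕ+ →₀ ℤ),
      pair2 (x ⊗ₜ[ℤ] y) (u ⊗ₜ[ℤ] v) = pair x u * pair y v)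
    (f : List ℕ+ × List ℕ+ →₀ ℤ) (β γ : List ℕ+) :
    pair2 (ZlTensor f) (single β 1 ⊗ₜ single γ 1) = f (β, γ) := by
  induction f using Finsupp.induction_linear with
  | zero => rw [map_zero, map_zero, LinearMap.zero_apply, Finsupp.zero_apply]
  | add f g hf hg => rw [map_add, map_add, LinearMap.add_apply, hf, hg, Finsupp.add_apply]
  | single p c =>
    rw [ZlTensor, linearCombination_single, map_smul, LinearMap.smul_apply, hpair2, hpair, hpair]
    simp [single_apply, ← ite_and, Prod.ext_iff, and_comm]

end TensorSquare

/-- Under the duality pairing `⟨Z_α, M_β⟩ = δ_{α,β}` between `NSymm` and `QSymm`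
(with `⟨x ⊗ y, x' ⊗ y'⟩ = ⟨x,x'⟩⟨y,y'⟩` on tensor squares), the coproduct
`μ(Z_n) = ∑_{i+j=n} Z_i ⊗ Z_j` of `NSymm` is dual to the overlapping shuffle
product of `QSymm`: `⟨μ(Z_α), M_β ⊗ M_γ⟩ = ⟨Z_α, M_β · M_γ⟩`. -/
theorem nsymm_coproduct_dual_to_overlapping_shuffle
    (μ : NSymm →ₐ[ℤ] @TensorProduct ℤ _ NSymm NSymm _ _ Algebra.toModule Algebra.toModule)
    (hμ : ∀ n : ℕ, μ (Z n) = ∑ p ∈ Finset.HasAntidiagonal.antidiagonal n, Z p.1 ⊗ₜ[ℤ] Z p.2)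
    (pair : NSymm →ₗ[ℤ] (List ℕ+ →₀ ℤ) →ₗ[ℤ] ℤ)
    (hpair : ∀ α β : List ℕ+,
      pair (Zl α) (Finsupp.single β 1) = if α = β then 1 else 0)
    (pair2 : NSymm ⊗[ℤ] NSymm →ₗ[ℤ]
      ((List ℕ+ →₀ ℤ) ⊗[ℤ] (List ℕ+ →₀ ℤ)) →ₗ[ℤ] ℤ)
    (hpair2 : ∀ (x y : NSymm) (u v : List ℕ+ →₀ ℤ),
      pair2 (x ⊗ₜ[ℤ] y) (u ⊗ₜ[ℤ] v) = pair x u * pair y v) :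
    ∀ α β γ : List ℕ+,
      pair2 (μ (Zl α)) (Finsupp.single β 1 ⊗ₜ[ℤ] Finsupp.single γ 1)
        = pair (Zl α) (oshMul (Finsupp.single β 1) (Finsupp.single γ 1)) := by
  intro α β γ
  calc pair2 (μ (Zl α)) (single β 1 ⊗ₜ single γ 1) = coproductCoeff α (β, γ) := by
        rw [coproduct_Zl μ hμ]
        exact pair2_ZlTensor hpair hpair2 _ β γ
    _ = pair (Zl α) (oshMul (single β 1) (single γ 1)) := by
        rw [oshMul_single_one, pair_Zl hpair, lapply_apply, coproductCoeff_apply]
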